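/- If N is a median subalgebra of M and X ⊆ N, then the convex hull of X computed in N equals N intersected with the convex hull of X computed in M. -/

import Mathlib

/-- A median algebra: a set with a ternary median operation satisfying (Med 1)-(Med 3). -/
structure MedianAlgebra (M : Type*) where
  m : M → M → M → M
  comm₁ : ∀ x y z, m x y z = m x z y
  comm₂ : ∀ x y z, m x y z = m y z x
  idem : ∀ x y, m x x y = x
  assoc : ∀ x y z u v, m (m x y z) u v = m x (m y u v) (m z u v)

namespace MedianAlgebra

variable {M : Type*}

/-- The interval `[x,y] = {z | z = m x y z}`. -/
def I (A : MedianAlgebra M) (x y : M) : Set M := {z | z = A.m x y z}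

/-- A subset is convex if it contains the interval between any two of its points. -/
def Conv (A : MedianAlgebra M) (C : Set M) : Prop :=
  ∀ x ∈ C, ∀ y ∈ C, A.I x y ⊆ C

/-- A half space is a convex set with convex complement. -/
def Halfspace (A : MedianAlgebra M) (H : Set M) : Prop :=
  A.Conv H ∧ A.Conv Hᶜ

/-- The convex hull of a set: the intersection of all convex sets containing it. -/
def hull (A : MedianAlgebra M) (X : Set M) : Set M :=
  ⋂₀ {C | A.Conv C ∧ X ⊆ C}

/-- The separator `Δ(X,Y)`: half spaces containing `X` and disjoint from `Y`. -/
def sep (A : MedianAlgebra M) (X Y : Set M) : Set (Set M) :=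
  {H | A.Halfspace H ∧ X ⊆ H ∧ Y ⊆ Hᶜ}

end MedianAlgebra

/-- A subset of `N` that is convex relative to the subalgebra `N`. -/
def MedianAlgebra.ConvIn {M : Type*} (A : MedianAlgebra M) (N C : Set M) : Prop :=
  C ⊆ N ∧ ∀ x ∈ C, ∀ y ∈ C, N ∩ A.I x y ⊆ C

/-- The convex hull of `X` computed inside the subalgebra `N`. -/
def MedianAlgebra.hullIn {M : Type*} (A : MedianAlgebra M) (N X : Set M) : Set M :=
  ⋂₀ {C | A.ConvIn N C ∧ X ⊆ C}

/-! Only `N ∩ hull X ⊆ hullIn N X` needs an idea. For `x ∈ X` and points `y₁, …, yₖ ∈ X`,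
the map `w ↦ m y₁ w (m y₂ w (… (m yₖ w x)))` is a gate map (a nearest-point retraction), so its
fixed points form a convex set. These fixed-point sets are directed under inclusion, hence their
union is convex; it contains `X`, so it contains `hull X`. A point `z ∈ N` fixed by such a map is
built from `z` and points of `X` by medians, and each stage `m yᵢ z p` lies in `N ∩ [yᵢ, p]`,
so `z` lies in the hull of `X` computed in `N`. -/

open Function Set

namespace MedianAlgebra

variable {M : Type*} (A : MedianAlgebra M)

lemma m_swap_left (x y z : M) : A.m x y z = A.m y x z := by rw [A.comm₂, A.comm₁]

lemma m_cycle (x y z : M) : A.m x y z = A.m z x y := by rw [A.comm₂, A.comm₂]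

lemma m_swap_outer (x y z : M) : A.m x y z = A.m z y x := by rw [A.m_cycle, A.comm₁]

lemma m_idem_outer (x y : M) : A.m x y x = x := by rw [A.comm₁, A.idem]

lemma m_idem_right (x y : M) : A.m x y y = y := by rw [A.m_swap_left, A.m_idem_outer]

lemma mem_I {x y z : M} : z ∈ A.I x y ↔ z = A.m x y z := Iff.rfl

lemma I_comm (x y : M) : A.I x y = A.I y x := by
  ext z
  rw [mem_I, mem_I, A.m_swap_left]

lemma m_mem_I (x y z : M) : A.m x y z ∈ A.I x y :=
  calc A.m x y z = A.m z x y := A.m_cycle x y z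
    _ = A.m (A.m z x y) x y := by rw [A.assoc, A.idem, A.m_idem_outer]
    _ = A.m x y (A.m x y z) := by rw [A.m_cycle x y (A.m x y z), A.m_cycle x y z]

lemma median_eq_of_mem_I {a b c s : M} (hab : s ∈ A.I a b) (hac : s ∈ A.I a c)
    (hbc : s ∈ A.I b c) : A.m a b c = s := by
  rw [mem_I] at hab hac hbc
  have hc : A.m (A.m a b c) c s = s := by
    rw [A.assoc, ← hbc, A.idem, A.comm₁, ← hac]
  have hb : A.m (A.m a b c) b s = s := by
    rw [A.comm₁ a b c, A.assoc, A.m_swap_left c b s, ← hbc, A.idem, A.comm₁, ← hab]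
  calc A.m a b c = A.m (A.m a b c) (A.m a b c) s := (A.idem _ s).symm
    _ = A.m a (A.m b (A.m a b c) s) (A.m c (A.m a b c) s) := A.assoc _ _ _ _ _
    _ = s := by rw [A.m_swap_left b, hb, A.m_swap_left c, hc, A.m_idem_right]

lemma mem_I_antisymm {a p q : M} (hq : q ∈ A.I p a) (hp : p ∈ A.I q a) : q = p := by
  rw [mem_I] at hq hp
  rw [hq, A.m_swap_outer, ← hp]

lemma mem_I_trans_left_right {u v w g : M} (hw : w ∈ A.I u v) (hg : g ∈ A.I u w) :
    w ∈ A.I g v := by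
  rw [mem_I] at hw hg ⊢
  -- `s` lies in all three pairwise intervals of `u, v, w`, so it is their median `w`.
  set s := A.m g v w with hs
  have hvw : s = A.m v w s := by
    rw [hs, A.comm₂]
    exact A.m_mem_I v w g
  have huw : s = A.m u w s :=
    calc s = A.m (A.m u w g) v w := by rw [← hg]
      _ = A.m u w s := by rw [A.assoc, A.m_idem_outer]
  have huv : s = A.m u v s :=
    calc s = A.m (A.m u v w) v s := by rw [← hw, A.m_swap_left, ← hvw]
      _ = A.m u v (A.m v w s) := by rw [A.assoc, A.idem, A.m_swap_left w]
      _ = A.m u v s := by rw [← hvw]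
  rw [hw, A.median_eq_of_mem_I huv huw hvw]

lemma m_mem_I_of_mem_I (x : M) {p q w : M} (hp : p ∈ A.I q w) : A.m x w p ∈ A.I q w := by
  rw [mem_I] at hp ⊢
  rw [A.m_cycle q, A.assoc, A.m_idem_outer, A.comm₂ p, ← hp]

lemma mem_I_of_mem_I_of_mem_I {h q w x z : M} (hh : h ∈ A.I x q) (hx : z ∈ A.I x w)
    (hq : z ∈ A.I q w) : z ∈ A.I h w := by
  -- Geometrically: a half-space containing `h` and `w` contains `x` or `q`, hence `z`.
  -- Algebraically: `t = m h w z` lies in the three pairwise intervals of `x, w, z`.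
  rw [mem_I] at hh hx hq ⊢
  set t := A.m h w z with ht
  have hxw : t = A.m x w t := by
    rw [A.m_cycle x, ht, A.assoc, A.m_idem_outer, A.comm₂ z, ← hx]
  have hxz : t = A.m x z t := by
    conv_lhs => rw [ht, hh, A.assoc, ← hq]
  have hwz : t = A.m w z t := by
    rw [ht, A.comm₂]
    exact A.m_mem_I w z h
  rw [← A.median_eq_of_mem_I hxw hxz hwz, ← hx]

lemma subset_hull (X : Set M) : X ⊆ A.hull X := fun _ hx _ hC => hC.2 hx

lemma conv_hull (X : Set M) : A.Conv (A.hull X) :=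
  fun _ ha _ hb _ hz C hC => hC.1 _ (ha C hC) _ (hb C hC) hz

lemma hull_subset_of_conv {X C : Set M} (hC : A.Conv C) (hXC : X ⊆ C) : A.hull X ⊆ C :=
  sInter_subset_of_mem ⟨hC, hXC⟩

lemma subset_hullIn (N X : Set M) : X ⊆ A.hullIn N X := fun _ hx _ hC => hC.2 hx

lemma convIn_hullIn {N X : Set M} (hX : X ⊆ N) : A.ConvIn N (A.hullIn N X) :=
  ⟨sInter_subset_of_mem ⟨⟨subset_rfl, fun _ _ _ _ => inter_subset_left⟩, hX⟩,
    fun _ ha _ hb _ hw C hC => hC.1.2 _ (ha C hC) _ (hb C hC) hw⟩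

lemma hullIn_subset_of_convIn {N X C : Set M} (hC : A.ConvIn N C) (hXC : X ⊆ C) :
    A.hullIn N X ⊆ C :=
  sInter_subset_of_mem ⟨hC, hXC⟩

lemma convIn_inter_hull (N X : Set M) : A.ConvIn N (N ∩ A.hull X) :=
  ⟨inter_subset_left, fun _ ha _ hb _ hw => ⟨hw.1, A.conv_hull X _ ha.2 _ hb.2 hw.2⟩⟩

structure IsGate (γ : M → M) : Prop where
  idem : ∀ w, γ (γ w) = γ w
  mem_I_of_isFixedPt : ∀ w h, IsFixedPt γ h → γ w ∈ A.I h w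

section Gate

variable {A}

lemma IsGate.conv_fixedPoints {γ : M → M} (hγ : A.IsGate γ) : A.Conv (fixedPoints γ) := by
  intro a ha b hb z hz
  have hza : z = A.m (γ z) b z := A.mem_I_trans_left_right hz (hγ.mem_I_of_isFixedPt z a ha)
  have hzb : γ z = A.m (γ z) b z := (hγ.mem_I_of_isFixedPt z b hb).trans (A.m_cycle _ _ _)
  exact hzb.trans hza.symm

lemma isGate_const (x : M) : A.IsGate (fun _ => x) where
  idem _ := rfl
  mem_I_of_isFixedPt w h hh := by
    obtain rfl : x = h := hh
    exact (A.m_idem_outer x w).symm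

lemma IsGate.apply_adjoin {γ : M → M} (hγ : A.IsGate γ) (x w : M) :
    γ (A.m x w (γ w)) = γ w := by
  set p := γ w
  set a := A.m x w p
  have hpq : p ∈ A.I (γ a) w := hγ.mem_I_of_isFixedPt w _ (hγ.idem a)
  have hqp : γ a ∈ A.I p a := hγ.mem_I_of_isFixedPt a p (hγ.idem w)
  have ha : a ∈ A.I w p := by
    rw [show a = A.m w p x from A.comm₂ x w p]
    exact A.m_mem_I w p x
  have hpa : p ∈ A.I a (γ a) := A.mem_I_trans_left_right (by rwa [I_comm]) ha
  rw [I_comm] at hpa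
  exact A.mem_I_antisymm hqp hpa

lemma IsGate.adjoin {γ : M → M} (hγ : A.IsGate γ) (x : M) :
    A.IsGate (fun w => A.m x w (γ w)) where
  idem w := by
    simp only [hγ.apply_adjoin]
    rw [A.comm₁ x w (γ w), A.comm₁ x (A.m x (γ w) w)]
    exact (A.m_mem_I x (γ w) w).symm
  mem_I_of_isFixedPt w h hh := by
    have hh' : h ∈ A.I x (γ h) := by
      rw [mem_I, A.comm₁]
      exact hh.symm
    have hp : γ w ∈ A.I (γ h) w := hγ.mem_I_of_isFixedPt w (γ h) (hγ.idem h)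
    exact A.mem_I_of_mem_I_of_mem_I hh' (A.m_mem_I x w (γ w)) (A.m_mem_I_of_mem_I x hp)

end Gate

/-- The gate onto the convex hull of `x :: L`. -/
def listGate (x : M) : List M → M → M
  | [], _ => x
  | y :: L, w => A.m y w (listGate x L w)

lemma isGate_listGate (x : M) (L : List M) : A.IsGate (A.listGate x L) := by
  induction L with
  | nil => exact isGate_const x
  | cons y L ih => exact ih.adjoin y

lemma isFixedPt_listGate_append_left {x w : M} {L : List M} (h : IsFixedPt (A.listGate x L) w) :
    ∀ K, IsFixedPt (A.listGate x (K ++ L)) w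
  | [] => h
  | y :: K => by
    show A.m y w (A.listGate x (K ++ L) w) = w
    rw [isFixedPt_listGate_append_left h K, A.m_idem_right]

lemma isFixedPt_listGate_append_cons {x w : M} {L : List M} (x' : M) (K : List M)
    (h : IsFixedPt (A.listGate x L) w) : IsFixedPt (A.listGate x' (L ++ x :: K)) w := by
  induction L generalizing w with
  | nil =>
    obtain rfl : x = w := h
    exact A.idem x _
  | cons y L ih =>
    set g := A.listGate x' (L ++ x :: K)
    set p := A.listGate x L w
    have hw : w ∈ A.I p y := by
      rw [mem_I, A.comm₂]
      exact h.symm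
    have hp : IsFixedPt g p := ih ((A.isGate_listGate x L).idem w)
    have hg : g w ∈ A.I p w := (A.isGate_listGate x' _).mem_I_of_isFixedPt w p hp
    show A.m y w (g w) = w
    rw [← A.comm₂]
    exact (A.mem_I_trans_left_right hw hg).symm

def gatedPoints (X : Set M) : Set M :=
  {w | ∃ x ∈ X, ∃ L : List M, (∀ y ∈ L, y ∈ X) ∧ IsFixedPt (A.listGate x L) w}

lemma conv_gatedPoints (X : Set M) : A.Conv (A.gatedPoints X) := by
  rintro u ⟨x₁, hx₁, L₁, hL₁, hu⟩ v ⟨x₂, hx₂, L₂, hL₂, hv⟩ w hw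
  refine ⟨x₂, hx₂, L₁ ++ x₁ :: L₂, ?_, (A.isGate_listGate x₂ _).conv_fixedPoints u ?_ v ?_ hw⟩
  · simp only [List.mem_append, List.mem_cons]
    rintro y (hy | rfl | hy)
    exacts [hL₁ y hy, hx₁, hL₂ y hy]
  · exact A.isFixedPt_listGate_append_cons x₂ L₂ hu
  · simpa using A.isFixedPt_listGate_append_left hv (L₁ ++ [x₁])

lemma hull_subset_gatedPoints (X : Set M) : A.hull X ⊆ A.gatedPoints X :=
  A.hull_subset_of_conv (A.conv_gatedPoints X) fun x hx => ⟨x, hx, [], by simp, rfl⟩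

lemma listGate_mem_hullIn {N X : Set M} (hN : ∀ x ∈ N, ∀ y ∈ N, ∀ z ∈ N, A.m x y z ∈ N)
    (hX : X ⊆ N) {x z : M} (hx : x ∈ X) (hz : z ∈ N) :
    ∀ L : List M, (∀ y ∈ L, y ∈ X) → A.listGate x L z ∈ A.hullIn N X
  | [], _ => A.subset_hullIn N X hx
  | y :: L, hL => by
    have hy : y ∈ X := hL y List.mem_cons_self
    have hp := listGate_mem_hullIn hN hX hx hz L fun a ha => hL a (List.mem_cons_of_mem y ha)
    have hC := A.convIn_hullIn hX
    refine hC.2 y (A.subset_hullIn N X hy) _ hp ⟨hN y (hX hy) z hz _ (hC.1 hp), ?_⟩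
    show A.m y z _ ∈ A.I y _
    rw [A.comm₁]
    exact A.m_mem_I _ _ _

end MedianAlgebra

theorem hullIn_eq_inter_hull {M : Type*} (A : MedianAlgebra M) (N X : Set M)
    (hN : ∀ x ∈ N, ∀ y ∈ N, ∀ z ∈ N, A.m x y z ∈ N) (hX : X ⊆ N) :
    A.hullIn N X = N ∩ A.hull X := by
  refine (A.hullIn_subset_of_convIn (A.convIn_inter_hull N X)
    fun x hx => ⟨hX hx, A.subset_hull X hx⟩).antisymm ?_
  rintro z ⟨hzN, hz⟩
  obtain ⟨x, hx, L, hL, hfix⟩ := A.hull_subset_gatedPoints X hz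
  rw [← hfix]
  exact A.listGate_mem_hullIn hN hX hx hzN L hL
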